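/- There is no complete Mammen space (ℕ, S, C) in which the family S of open sets is an analytic subset of the power set of ℕ (identified with Cantor space 2^ℕ). -/

import Mathlib

open Set Topology TopologicalSpace

/-- A topology is perfect if every nonempty open set is infinite. -/
def IsPerfectTop {U : Type*} (T : TopologicalSpace U) : Prop :=
  ∀ V : Set U, IsOpen[T] V → V.Nonempty → V.Infinite

/-- A perfect topology is maximal if no strictly finer topology is perfect. -/
def IsMaxPerfectTop {U : Type*} (T : TopologicalSpace U) : Prop :=
  IsPerfectTop T ∧ ∀ T' : TopologicalSpace U, T' ≤ T → IsPerfectTop T' → T' = T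

/-- `(U, T, C)` is a Mammen space. -/
structure IsMammen {U : Type*} (T : TopologicalSpace U) (C : Set (Set U)) : Prop where
  nonemptyU : Nonempty U
  perfect : IsPerfectTop T
  hausdorff : @T2Space U T
  exNonempty : ∃ c ∈ C, c.Nonempty
  unionMem : ∀ c ∈ C, ∀ d ∈ C, c ∪ d ∈ C
  interMem : ∀ c ∈ C, ∀ d ∈ C, c ∩ d ∈ C
  singletonMem : ∀ c ∈ C, c.Nonempty → ∃ x ∈ c, ({x} : Set U) ∈ C
  emptyMem : ∅ ∈ C
  openInterC : ∀ s ∈ C, IsOpen[T] s → s = ∅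
  interOpenMem : ∀ c ∈ C, ∀ s : Set U, IsOpen[T] s → c ∩ s ∈ C

/-- A Mammen space is complete if every subset is the union of an open set
and a choice category. -/
def MammenComplete {U : Type*} (T : TopologicalSpace U) (C : Set (Set U)) : Prop :=
  ∀ X : Set U, ∃ s c, IsOpen[T] s ∧ c ∈ C ∧ X = s ∪ c


/-- Characteristic-function identification of the power set of ℕ with Cantor space. -/
noncomputable def chi (A : Set ℕ) : ℕ → Bool := fun n =>
  @decide (n ∈ A) (Classical.propDecidable _)

/-! In a complete Mammen space `C` is exactly the ideal of sets with empty interior, so the dense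
subsets of `ℕ` form a filter all of whose members are infinite. If the open sets form an analytic
family, this filter is coanalytic in Cantor space and therefore has the Baire property
(Lusin–Sierpiński). By Sierpiński's theorem it is then meagre, and by Talagrand's
characterisation of meagre filters there is an interval partition such that every dense set meets
almost every interval. Along an uncountable almost disjoint family of sets of indices, the unions
of the corresponding intervals then have nonempty interiors which are pairwise disjoint, since
their pairwise intersections are finite open sets; this is impossible in the countable space `ℕ`.
-/

open MeasureTheory Filter PiNat Function

theorem PiNat.exists_cylinder_subset {E : ℕ → Type*} [∀ n, TopologicalSpace (E n)]
    [∀ n, DiscreteTopology (E n)] {x : ∀ n, E n} {s : Set (∀ n, E n)} (hs : s ∈ 𝓝 x) :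
    ∃ n, cylinder x n ⊆ s := by
  obtain ⟨_, ⟨y, n, rfl⟩, hx, hsub⟩ := (isTopologicalBasis_cylinders E).mem_nhds_iff.1 hs
  exact ⟨n, mem_cylinder_iff_eq.1 hx ▸ hsub⟩

theorem PiNat.exists_forall_res {α : Type*} {p : List α → Prop} (h₀ : p [])
    (h : ∀ l, p l → ∃ a, p (a :: l)) : ∃ x : ℕ → α, ∀ n, p (res x n) := by
  have : Nonempty α := let ⟨a, _⟩ := h [] h₀; ⟨a⟩
  choose! g hg using h
  let l : ℕ → List α := fun n => Nat.rec [] (fun _ l => g l :: l) n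
  have hl : ∀ n, p (l n) := fun n => Nat.rec h₀ (fun n ih => hg _ ih) n
  refine ⟨fun n => g (l n), fun n => ?_⟩
  suffices res (fun n => g (l n)) n = l n from this ▸ hl n
  induction n with
  | zero => rfl
  | succ n ih => rw [res_succ, ih]

section BaireProperty

variable {α : Type*} [TopologicalSpace α]

theorem IsClosed.baireMeasurableSet {s : Set α} (hs : IsClosed s) : BaireMeasurableSet s :=
  hs.isOpen_compl.baireMeasurableSet.of_compl

theorem exists_baireMeasurableSet_hull [SecondCountableTopology α] (s : Set α) :
    ∃ h, BaireMeasurableSet h ∧ s ⊆ h ∧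
      ∀ b, BaireMeasurableSet b → s ⊆ b → IsMeagre (h \ b) := by
  obtain ⟨B, hBc, -, hB⟩ := exists_countable_basis α
  let I := {u ∈ B | IsMeagre (s ∩ u)}
  let W := ⋃ u ∈ I, u
  have hsW : IsMeagre (s ∩ W) := by
    rw [inter_iUnion₂]
    exact isMeagre_biUnion (hBc.mono (sep_subset _ _)) fun u hu => hu.2
  have hW : IsOpen W := isOpen_biUnion fun u hu => hB.isOpen hu.1
  refine ⟨Wᶜ ∪ s, ?_, subset_union_right, fun b hb hsb => ?_⟩
  · rw [← union_sdiff_self, sdiff_compl]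
    exact hW.isClosed_compl.baireMeasurableSet.union hsW.baireMeasurableSet
  obtain ⟨V, hV, hbV⟩ := hb.residualEq_isOpen
  -- a basic open set missing `closure V` meets `s ⊆ b` only where `b` and `V` differ
  have hWV : Wᶜ ⊆ closure V := by
    intro x hxW
    by_contra hxV
    obtain ⟨u, huB, hxu, hu⟩ := hB.exists_subset_of_mem_open hxV isClosed_closure.isOpen_compl
    refine hxW (mem_biUnion ⟨huB, ?_⟩ hxu)
    filter_upwards [hbV.mem_iff] with y hy ⟨hys, hyu⟩
    exact hu hyu (subset_closure (hy.1 (hsb hys)))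
  filter_upwards [hbV.mem_iff, (closure_residualEq hV.isLocallyClosed).mem_iff]
    with y hyb hyV ⟨hy, hyb'⟩
  rcases hy with hy | hy
  · exact hyb' (hyb.2 (hyV.1 (hWV hy)))
  · exact hyb' (hsb hy)

theorem BaireMeasurableSet.suslin [SecondCountableTopology α] {B : List ℕ → Set α}
    (hB : ∀ l, BaireMeasurableSet (B l)) :
    BaireMeasurableSet {y | ∃ x : ℕ → ℕ, ∀ n, y ∈ B (res x n)} := by
  choose hull hullBM hull_sup hull_min using exists_baireMeasurableSet_hull (α := α)
  let A : List ℕ → Set α := fun l => {y | ∃ x, res x l.length = l ∧ ∀ n, y ∈ B (res x n)}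
  have hAB : ∀ l, A l ⊆ B l := fun l y ⟨x, hx, hy⟩ => hx ▸ hy l.length
  have hA_cons : ∀ l, A l ⊆ ⋃ m, A (m :: l) := fun l y ⟨x, hx, hy⟩ =>
    mem_iUnion.2 ⟨x l.length, x, by rw [List.length_cons, res_succ, hx], hy⟩
  let D : List ℕ → Set α := fun l => hull (A l) ∩ B l
  have hD : ∀ l, BaireMeasurableSet (D l) := fun l => (hullBM _).inter (hB l)
  have hAD : ∀ l, A l ⊆ D l := fun l => subset_inter (hull_sup _) (hAB l)
  have hE : ∀ l, IsMeagre (D l \ ⋃ m, D (m :: l)) := fun l =>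
    (hull_min (A l) _ (.iUnion fun m => hD _) ((hA_cons l).trans (iUnion_mono fun m => hAD _))).mono
      (sdiff_subset_sdiff_left inter_subset_left)
  -- off the meagre union of these dead ends, every point of `D []` lies on a branch of `D`
  refine (hD []).congr ?_
  filter_upwards [isMeagre_iUnion hE] with y hy
  refine propext ⟨fun hyD => ?_, fun ⟨x, hx⟩ => hAD [] ⟨x, rfl, hx⟩⟩
  obtain ⟨x, hx⟩ := exists_forall_res (p := fun l => y ∈ D l) hyD fun l hl => by
    by_contra! h
    exact hy (mem_iUnion.2 ⟨l, hl, by simpa using h⟩)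
  exact ⟨x, fun n => (hx n).2⟩

theorem eq_of_forall_mem_closure_image_cylinder [T2Space α] {f : (ℕ → ℕ) → α}
    (hf : Continuous f) {x : ℕ → ℕ} {y : α} (hy : ∀ n, y ∈ closure (f '' cylinder x n)) :
    y = f x := by
  by_contra hne
  obtain ⟨U, hU, V, hV, hUV⟩ := Filter.disjoint_iff.1 (disjoint_nhds_nhds.2 hne)
  obtain ⟨n, hn⟩ := exists_cylinder_subset (hf.continuousAt hV)
  obtain ⟨_, hzU, hzV⟩ := mem_closure_iff_nhds.1 (hy n) U hU
  exact hUV.ne_of_mem hzU (image_subset_iff.2 hn hzV) rfl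

theorem MeasureTheory.AnalyticSet.baireMeasurableSet [T2Space α] [SecondCountableTopology α]
    {s : Set α} (hs : AnalyticSet s) : BaireMeasurableSet s := by
  rw [AnalyticSet_def] at hs
  rcases hs with rfl | ⟨f, hf, rfl⟩
  · exact IsMeagre.empty.baireMeasurableSet
  let B : List ℕ → Set α := fun l => closure (f '' {z | res z l.length = l})
  have hB : ∀ x n, B (res x n) = closure (f '' PiNat.cylinder x n) := fun x n => by
    simp only [B, res_length, cylinder_eq_res]
  have hrange : range f = {y | ∃ x : ℕ → ℕ, ∀ n, y ∈ B (res x n)} := by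
    simp only [hB]
    ext y
    refine ⟨?_, fun ⟨x, hx⟩ => ⟨x, (eq_of_forall_mem_closure_image_cylinder hf hx).symm⟩⟩
    rintro ⟨x, rfl⟩
    exact ⟨x, fun n => subset_closure (mem_image_of_mem f (self_mem_cylinder x n))⟩
  rw [hrange]
  exact .suslin fun _ => isClosed_closure.baireMeasurableSet

theorem MeasureTheory.AnalyticSet.inter [T2Space α] {s t : Set α} (hs : AnalyticSet s)
    (ht : AnalyticSet t) : AnalyticSet (s ∩ t) := by
  rw [inter_eq_iInter]
  exact .iInter (Bool.forall_bool.2 ⟨ht, hs⟩)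

end BaireProperty

theorem chi_eq_true_iff {A : Set ℕ} {n : ℕ} : chi A n = true ↔ n ∈ A := by
  simp [chi]

def flipFrom (m : ℕ) (v : ℕ → Bool) : ℕ → Bool := fun i => if i < m then v i else !v i

theorem flipFrom_involutive (m : ℕ) : Involutive (flipFrom m) := by
  intro v
  ext i
  by_cases h : i < m <;> simp [flipFrom, h]

theorem continuous_flipFrom (m : ℕ) : Continuous (flipFrom m) := by
  refine continuous_pi fun i => ?_
  by_cases h : i < m
  · simpa [flipFrom, h] using continuous_apply i
  · simp only [flipFrom, if_neg h]
    exact (continuous_of_discreteTopology (f := not)).comp (continuous_apply i)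

/-- Sierpiński. If the filter were comeagre on a cylinder, a generic point of the cylinder and
its flip beyond the cylinder's length would be two members of the filter with finite
intersection. -/
theorem isMeagre_setOf_mem_of_baireMeasurableSet {F : Filter ℕ} (hF : ∀ s ∈ F, s.Infinite)
    (hBM : BaireMeasurableSet {v : ℕ → Bool | {n | v n} ∈ F}) :
    IsMeagre {v : ℕ → Bool | {n | v n} ∈ F} := by
  obtain ⟨V, hV, hDV⟩ := hBM.residualEq_isOpen
  rcases V.eq_empty_or_nonempty with rfl | ⟨x, hx⟩
  · filter_upwards [hDV.mem_iff] with v hv using hv.not.2 (notMem_empty v)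
  exfalso
  obtain ⟨m, hm⟩ := exists_cylinder_subset (hV.mem_nhds hx)
  have hflip : Tendsto (flipFrom m) (residual _) (residual _) :=
    tendsto_residual_of_isOpenMap (continuous_flipFrom m)
      (Homeomorph.mk ((flipFrom_involutive m).toPerm _) (continuous_flipFrom m)
        (continuous_flipFrom m)).isOpenMap
  obtain ⟨v, hv, hvD, hfvD⟩ := (dense_of_mem_residual (hDV.mem_iff.and
    (hflip.eventually hDV.mem_iff))).inter_open_nonempty _ (isOpen_cylinder _ x m)
      ⟨x, self_mem_cylinder x m⟩
  have hfv : flipFrom m v ∈ cylinder x m := fun i hi => by simp [flipFrom, hi, hv i hi]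
  refine hF _ (inter_mem (hvD.2 (hm hv)) (hfvD.2 (hm hfv))) ((finite_lt_nat m).subset ?_)
  rintro i ⟨hi, hi'⟩
  show i < m
  by_contra! hmi
  simp_all [flipFrom, not_lt.2 hmi]

theorem exists_eqOn_Ico_of_dense {G : Set (ℕ → Bool)} (hGo : IsOpen G) (hGd : Dense G)
    (n : ℕ) : ∃ n', n < n' ∧ ∃ t : ℕ → Bool, ∀ w, EqOn w t (Ico n n') → w ∈ G := by
  -- one extension, found by successively extending along every prefix of length `n`
  have key : ∀ s : Finset (Fin n → Bool), ∃ n', n ≤ n' ∧ ∃ t : ℕ → Bool, ∀ a ∈ s, ∀ w,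
      (∀ i : Fin n, w i = a i) → EqOn w t (Ico n n') → w ∈ G := by
    intro s
    induction s using Finset.induction_on with
    | empty => exact ⟨n, le_rfl, fun _ => false, by simp⟩
    | insert a s _ ih =>
      obtain ⟨n₁, hn₁, t₁, ht₁⟩ := ih
      let y : ℕ → Bool := fun i => if h : i < n then a ⟨i, h⟩ else t₁ i
      obtain ⟨z, hzy, hzG⟩ := hGd.inter_open_nonempty _ (isOpen_cylinder _ y n₁)
        ⟨y, self_mem_cylinder y n₁⟩
      obtain ⟨n₂, hn₂⟩ := exists_cylinder_subset (hGo.mem_nhds hzG)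
      refine ⟨max n₁ n₂, hn₁.trans (le_max_left _ _), z, ?_⟩
      simp only [Finset.mem_insert, forall_eq_or_imp]
      refine ⟨fun w hwa hwz => hn₂ fun i hi => ?_, fun b hb w hwb hwz => ht₁ b hb w hwb ?_⟩
      · by_cases hin : i < n
        · simp [hwa ⟨i, hin⟩, hzy i (hin.trans_le hn₁), y, hin]
        · exact hwz ⟨not_lt.1 hin, hi.trans_le (le_max_right _ _)⟩
      · intro i hi
        rw [hwz ⟨hi.1, hi.2.trans_le (le_max_left _ _)⟩, hzy i hi.2]
        simp [y, not_lt.2 hi.1]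
  obtain ⟨n', hn', t, ht⟩ := key Finset.univ
  refine ⟨n' + 1, Nat.lt_succ_of_le hn', t, fun w hw => ?_⟩
  exact ht (fun i => w i) (Finset.mem_univ _) w (fun _ => rfl)
    (hw.mono (Ico_subset_Ico_right n'.le_succ))

/-- One direction of Talagrand's characterisation of meagre filters. -/
theorem exists_strictMono_finite_setOf_disjoint_Ico_of_isMeagre {F : Filter ℕ}
    (hF : IsMeagre {v : ℕ → Bool | {n | v n} ∈ F}) :
    ∃ N : ℕ → ℕ, StrictMono N ∧ ∀ X ∈ F, {k | Disjoint X (Ico (N k) (N (k + 1)))}.Finite := by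
  obtain ⟨S, hSo, hSd, hSc, hSD⟩ := mem_residual_iff.1 hF
  obtain ⟨g, hg⟩ := (hSc.insert univ).exists_eq_range (insert_nonempty _ _)
  have hgS : ∀ j, g j = univ ∨ g j ∈ S := fun j => by
    simpa only [← hg, mem_insert_iff] using mem_range_self (f := g) j
  have hgo : ∀ j, IsOpen (g j) := fun j => (hgS j).elim (· ▸ isOpen_univ) (hSo _)
  have hgd : ∀ j, Dense (g j) := fun j => (hgS j).elim (· ▸ dense_univ) (hSd _)
  let G : ℕ → Set (ℕ → Bool) := fun k => ⋂ j ∈ Iic k, g j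
  have hGo : ∀ k, IsOpen (G k) := fun k => (finite_Iic k).isOpen_biInter fun j _ => hgo j
  have hGd : ∀ k, Dense (G k) := fun k =>
    dense_biInter_of_isOpen (fun j _ => hgo j) (to_countable _) (fun j _ => hgd j)
  choose next hnext t ht using fun k => exists_eqOn_Ico_of_dense (hGo k) (hGd k)
  let N : ℕ → ℕ := fun k => Nat.rec 0 (fun k n => next k n) k
  have hN : StrictMono N := strictMono_nat_of_lt_succ fun k => hnext k (N k)
  refine ⟨N, hN, fun X hX => ?_⟩
  by_contra hK
  set K := {k | Disjoint X (Ico (N k) (N (k + 1)))}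
  -- enlarge `X` on the intervals it misses so as to land in every `G k`, `k ∈ K`
  let w := chi (X ∪ ⋃ k ∈ K, Ico (N k) (N (k + 1)) ∩ {i | t k (N k) i})
  have hwG : ∀ k ∈ K, w ∈ G k := fun k hk => ht k (N k) w fun i hi => by
    have hiX : i ∉ X := fun hiX => disjoint_left.1 hk hiX hi
    have huniq : ∀ k' ∈ K, i ∈ Ico (N k') (N (k' + 1)) → k' = k := fun k' _ hi' =>
      hN.monotone.pairwise_disjoint_on_Ico_succ.eq (not_disjoint_iff.2 ⟨i, hi', hi⟩)
    refine Bool.eq_iff_iff.2 (chi_eq_true_iff.trans ⟨?_, fun hit => Or.inr ?_⟩)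
    · rintro (hiX' | hiY)
      · exact absurd hiX' hiX
      · obtain ⟨k', hk', hi', hit⟩ := mem_iUnion₂.1 hiY
        exact huniq k' hk' hi' ▸ hit
    · exact mem_iUnion₂.2 ⟨k, hk, hi, hit⟩
  have hwD : w ∈ {v : ℕ → Bool | {n | v n} ∈ F} :=
    mem_of_superset hX fun i hi => chi_eq_true_iff.2 (Or.inl hi)
  refine hSD (fun s hs => ?_) hwD
  obtain ⟨j, rfl⟩ := hg ▸ mem_insert_of_mem univ hs
  obtain ⟨k, hk, hjk⟩ := Set.Infinite.exists_gt hK j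
  exact mem_iInter₂.1 (hwG k hk) j (mem_Iic.2 hjk.le)

theorem exists_almostDisjoint_family :
    ∃ A : (ℕ → Bool) → Set ℕ, (∀ x, (A x).Infinite) ∧ Pairwise fun x y => (A x ∩ A y).Finite := by
  -- the codes of the finite prefixes of `x`
  refine ⟨fun x => range fun n => Encodable.encode (res x n), fun x => infinite_range_of_injective
    fun m n h => by simpa using congrArg List.length (Encodable.encode_injective h),
    fun x y hxy => ?_⟩
  obtain ⟨i, hi⟩ := Function.ne_iff.1 hxy
  refine ((finite_Iic i).image fun n => Encodable.encode (res x n)).subset ?_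
  rintro _ ⟨⟨n, rfl⟩, n', hn'⟩
  have hres : res y n' = res x n := Encodable.encode_injective hn'
  obtain rfl : n' = n := by simpa using congrArg List.length hres
  refine ⟨n', mem_Iic.2 (not_lt.1 fun hin => hi ?_), rfl⟩
  exact (res_eq_res.1 hres hin).symm

theorem not_countable_nat_bool : ¬ Countable (ℕ → Bool) := fun h =>
  have : Countable (Set ℕ) := Injective.countable (f := chi) fun A B hAB =>
    ext fun n => by rw [← chi_eq_true_iff, hAB, chi_eq_true_iff]
  let ⟨f, hf⟩ := exists_injective_nat (Set ℕ)
  cantor_injective f hf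

theorem analyticSet_setOf_exists_disjoint {S : Set (Set ℕ)} (hS : AnalyticSet (chi '' S)) :
    AnalyticSet {v : ℕ → Bool | ∃ V ∈ S, V.Nonempty ∧ Disjoint V {n | v n}} := by
  -- instance search does not find `PolishSpace (ℕ → Bool)` without this step
  have : PolishSpace Bool := inferInstance
  borelize ((ℕ → Bool) × (ℕ → Bool))
  have hW : MeasurableSet
      {p : (ℕ → Bool) × (ℕ → Bool) | (∃ n, p.1 n) ∧ ∀ n, p.1 n → ¬ p.2 n} := by
    measurability
  convert ((hS.preimage continuous_fst).inter hW.analyticSet).image_of_continuous continuous_snd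
  ext v
  constructor
  · rintro ⟨V, hV, ⟨n, hn⟩, hVv⟩
    exact ⟨(chi V, v), ⟨⟨V, hV, rfl⟩, ⟨n, chi_eq_true_iff.2 hn⟩,
      fun i hi => disjoint_left.1 hVv (chi_eq_true_iff.1 hi)⟩, rfl⟩
  · rintro ⟨⟨_, v⟩, ⟨⟨V, hV, rfl⟩, ⟨n, hn⟩, hVv⟩, rfl⟩
    exact ⟨V, hV, ⟨n, chi_eq_true_iff.1 hn⟩,
      disjoint_left.2 fun i hi => hVv i (chi_eq_true_iff.2 hi)⟩

section Mammen

variable {U : Type*} [t : TopologicalSpace U] {C : Set (Set U)}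

theorem IsPerfectTop.infinite_of_dense [T1Space U] [Nonempty U] (ht : IsPerfectTop t)
    {X : Set U} (hX : Dense X) : X.Infinite := fun hfin =>
  ht univ isOpen_univ univ_nonempty (by rwa [← hX.closure_eq, hfin.isClosed.closure_eq])

theorem IsPerfectTop.not_forall_dense_finite_setOf_disjoint [Countable U]
    (ht : IsPerfectTop t) {I : ℕ → Set U} (hI : ∀ k, (I k).Finite)
    (hIdisj : Pairwise (Disjoint on I)) :
    ¬ ∀ X : Set U, Dense X → {k | Disjoint X (I k)}.Finite := by
  intro hdense
  obtain ⟨A, hAinf, hAdisj⟩ := exists_almostDisjoint_family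
  let Y : (ℕ → Bool) → Set U := fun x => ⋃ j ∈ A x, I j
  have hY : ∀ x, (interior (Y x)).Nonempty := fun x => by
    by_contra! h
    refine hAinf x ((hdense _ (interior_eq_empty_iff_dense_compl.1 h)).subset fun j hj => ?_)
    exact disjoint_compl_left.mono_right (subset_biUnion_of_mem hj)
  have hYdisj : Pairwise (Disjoint on fun x => interior (Y x)) := fun x y hxy => by
    refine disjoint_iff_inter_eq_empty.2 (by_contra fun h => ht _
      (isOpen_interior.inter isOpen_interior) (nonempty_iff_ne_empty.2 h) ?_)
    refine (((hAdisj hxy).biUnion fun j _ => hI j)).subset ?_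
    rintro u ⟨hux, huy⟩
    obtain ⟨j, hjx, hj⟩ := mem_iUnion₂.1 (interior_subset hux)
    obtain ⟨j', hjy, hj'⟩ := mem_iUnion₂.1 (interior_subset huy)
    obtain rfl := hIdisj.eq (not_disjoint_iff.2 ⟨u, hj, hj'⟩)
    exact mem_iUnion₂.2 ⟨j, ⟨hjx, hjy⟩, hj⟩
  exact not_countable_nat_bool (hYdisj.countable_of_isOpen_disjoint (fun _ => isOpen_interior) hY)

theorem IsMammen.interior_eq_empty_of_mem (hM : IsMammen t C) {c : Set U} (hc : c ∈ C) :
    interior c = ∅ := by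
  refine hM.openInterC _ ?_ isOpen_interior
  simpa [inter_eq_self_of_subset_right interior_subset] using
    hM.interOpenMem c hc (interior c) isOpen_interior

theorem MammenComplete.mem_of_interior_eq_empty (hC : MammenComplete t C) {X : Set U}
    (hX : interior X = ∅) : X ∈ C := by
  obtain ⟨s, c, hs, hc, rfl⟩ := hC X
  obtain rfl : s = ∅ := subset_eq_empty (hs.subset_interior_iff.2 subset_union_left) hX
  simpa using hc

/-- In a complete Mammen space `C` is the ideal of sets with empty interior, so the dual filter
consists of the dense sets. -/
def IsMammen.denseFilter (hM : IsMammen t C) (hC : MammenComplete t C) : Filter U :=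
  Filter.comk (· ∈ C) hM.emptyMem
    (fun _ hc _ hs => hC.mem_of_interior_eq_empty
      (subset_eq_empty (interior_mono hs) (hM.interior_eq_empty_of_mem hc)))
    hM.unionMem

theorem IsMammen.mem_denseFilter (hM : IsMammen t C) (hC : MammenComplete t C) {X : Set U} :
    X ∈ hM.denseFilter hC ↔ Dense X := by
  rw [denseFilter, Filter.mem_comk, ← compl_compl X, ← interior_eq_empty_iff_dense_compl,
    compl_compl]
  exact ⟨hM.interior_eq_empty_of_mem, hC.mem_of_interior_eq_empty⟩

end Mammen

theorem stmt15 :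
    ¬ ∃ (T : TopologicalSpace ℕ) (C : Set (Set ℕ)),
      IsMammen T C ∧ MammenComplete T C ∧
      MeasureTheory.AnalyticSet (chi '' {V : Set ℕ | IsOpen[T] V}) := by
  rintro ⟨T, C, hM, hC, hS⟩
  have : T2Space ℕ := hM.hausdorff
  have hcode : {v : ℕ → Bool | {n | v n} ∈ hM.denseFilter hC} =
      {v | ∃ V ∈ {V : Set ℕ | IsOpen V}, V.Nonempty ∧ Disjoint V {n | v n}}ᶜ := by
    ext v
    simp [hM.mem_denseFilter, dense_iff_inter_open, not_disjoint_iff_nonempty_inter]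
  obtain ⟨N, hN, hF⟩ := exists_strictMono_finite_setOf_disjoint_Ico_of_isMeagre <|
    isMeagre_setOf_mem_of_baireMeasurableSet
      (fun X hX => hM.perfect.infinite_of_dense ((hM.mem_denseFilter hC).1 hX))
      (hcode ▸ (analyticSet_setOf_exists_disjoint hS).baireMeasurableSet.compl)
  exact hM.perfect.not_forall_dense_finite_setOf_disjoint (fun k => finite_Ico _ _)
    hN.monotone.pairwise_disjoint_on_Ico_succ fun X hX => hF X ((hM.mem_denseFilter hC).2 hX)
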